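/- arXiv:1106.3577 — 3 statements merged into one kernel-verified Lean document; each statement's English description precedes it below -/
import Mathlib

section
/- Define truncated exponentiation (1+X)^{[Y]} := ∑_{i=0}^{p−1} (Y choose i) X^i in ℤ_{(p)}[X,Y]. Then for any commutative ring R of characteristic p, any nilpotent element x ∈ R with x^p = 0, and any y, z ∈ R, one has (1+x)^{[y]} · (1+x)^{[z]} = (1+x)^{[y+z]}. -/
/-- The binomial coefficient `(y choose i) = y(y-1)⋯(y-i+1)/i!` evaluated in a ring `R`:
division by `i!` is via `Ring.inverse` (for `i < p` and `R` of characteristic `p`,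
`i!` is invertible in `R`). -/
noncomputable def rchoose {R : Type*} [CommRing R] (y : R) (i : ℕ) : R :=
  (∏ k ∈ Finset.range i, (y - (k : R))) * Ring.inverse ((i.factorial : R))

/-!
Since `x ^ p = 0`, the product of two sums truncated below degree `p` is the Cauchy product
truncated below degree `p`. For `n < p` the factorial `n!` is a unit in characteristic `p`, so
`n! * rchoose y n` is the descending Pochhammer polynomial evaluated at `y`, and the coefficient
of `x ^ n` is matched by the Chu–Vandermonde identity for those polynomials.
-/

open Finset Polynomial Nat

theorem Finset.sum_range_mul_sum_range_of_pow_eq_zero {R : Type*} [CommSemiring R] {x : R}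
    {p : ℕ} (hx : x ^ p = 0) (a b : ℕ → R) :
    (∑ i ∈ range p, a i * x ^ i) * (∑ j ∈ range p, b j * x ^ j) =
      ∑ n ∈ range p, (∑ ij ∈ antidiagonal n, a ij.1 * b ij.2) * x ^ n := by
  set f : ℕ → ℕ → R := fun i j ↦ a i * x ^ i * (b j * x ^ j)
  have hf : ∀ i j, p ≤ i + j → f i j = 0 := fun i j h ↦ by
    simp only [f, mul_mul_mul_comm, ← pow_add, pow_eq_zero_of_le h hx, mul_zero]
  calc (∑ i ∈ range p, a i * x ^ i) * (∑ j ∈ range p, b j * x ^ j)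
      = ∑ i ∈ range p, ∑ j ∈ range (p - i), f i j := by
        rw [sum_mul_sum]
        refine sum_congr rfl fun i _ ↦ (sum_subset (range_subset_range.2 (sub_le p i)) ?_).symm
        intro j hj hj'
        simp only [mem_range] at hj hj'
        exact hf i j (by omega)
    _ = ∑ n ∈ range p, ∑ i ∈ range (n + 1), f i (n - i) := by
        simp only [range_eq_Ico]
        rw [← sum_Ico_Ico_comm 0 p fun i n ↦ f i (n - i)]
        refine sum_congr rfl fun i _ ↦ ?_
        simp only [sum_Ico_eq_sum_range, Nat.add_sub_cancel_left, ← range_eq_Ico]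
    _ = ∑ n ∈ range p, (∑ ij ∈ antidiagonal n, a ij.1 * b ij.2) * x ^ n := by
        refine sum_congr rfl fun n _ ↦ ?_
        rw [← Nat.sum_antidiagonal_eq_sum_range_succ f, sum_mul]
        refine sum_congr rfl fun ij hij ↦ ?_
        rw [← mem_antidiagonal.1 hij, pow_add]
        ring

theorem descPochhammer_smeval_eq_prod_range {R : Type*} [CommRing R] (y : R) (n : ℕ) :
    (descPochhammer ℤ n).smeval y = ∏ k ∈ range n, (y - (k : R)) := by
  rw [← aeval_eq_smeval, aeval_def, ← eval_map, descPochhammer_map,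
    descPochhammer_eval_eq_prod_range]

theorem natCast_factorial_mul_rchoose {R : Type*} [CommRing R] {n : ℕ} (hn : IsUnit (n ! : R))
    (y : R) : (n ! : R) * rchoose y n = (descPochhammer ℤ n).smeval y := by
  rw [rchoose, mul_left_comm, Ring.mul_inverse_cancel _ hn, mul_one,
    descPochhammer_smeval_eq_prod_range]

theorem rchoose_add {R : Type*} [CommRing R] {n : ℕ} (hn : IsUnit (n ! : R)) (y z : R) :
    rchoose (y + z) n = ∑ ij ∈ antidiagonal n, rchoose y ij.1 * rchoose z ij.2 := by
  refine hn.mul_left_cancel ?_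
  rw [natCast_factorial_mul_rchoose hn, Ring.descPochhammer_smeval_add _ (Commute.all y z),
    mul_sum]
  refine sum_congr rfl fun ⟨i, j⟩ hij ↦ ?_
  obtain rfl : i + j = n := mem_antidiagonal.1 hij
  rw [← natCast_factorial_mul_rchoose (hn.natCast_factorial_of_le (Nat.le_add_right i j)),
    ← natCast_factorial_mul_rchoose (hn.natCast_factorial_of_le (Nat.le_add_left j i)),
    ← Nat.choose_mul_factorial_mul_factorial (Nat.le_add_right i j), Nat.add_sub_cancel_left]
  push_cast
  ring

/-- Truncated exponentiation `(1+x)^{[y]} = ∑_{i=0}^{p-1} (y choose i) x^i` is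
multiplicative in the exponent, for `x` with `x^p = 0` in a commutative ring of
characteristic `p`. -/
theorem stmt1 (p : ℕ) (hp : p.Prime) (R : Type*) [CommRing R] [CharP R p]
    (x : R) (hx : x ^ p = 0) (y z : R) :
    (∑ i ∈ Finset.range p, rchoose y i * x ^ i) *
      (∑ i ∈ Finset.range p, rchoose z i * x ^ i) =
    ∑ i ∈ Finset.range p, rchoose (y + z) i * x ^ i := by
  have := Fact.mk hp
  rw [sum_range_mul_sum_range_of_pow_eq_zero hx]
  refine sum_congr rfl fun n hn ↦ ?_
  rw [rchoose_add ((IsUnit.natCast_factorial_iff_of_charP p).2 (mem_range.1 hn))]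
end

section
/- Let G be a cyclic group of order p² with generator σ₁, let σ₂ = σ₁^p, and work in the group algebra F[G] over a field F of characteristic p. For any μ ∈ F define Ψ₁ = σ₁·∑_{i=0}^{p−1} (μ choose i)(σ₂−1)^i − 1 and Ψ₂ = σ₂ − 1. Then Ψ₂^p = 0 and Ψ₁^p = Ψ₂ + δ for some δ in the ideal generated by (σ₂−1)² — in particular, when μ = 0, Ψ₁ = σ₁ − 1 satisfies (σ₁−1)^p = σ₂ − 1 exactly. -/
/-- The binomial coefficient `(μ choose i) = μ(μ-1)⋯(μ-i+1)/i!` evaluated in a field `F`. -/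
noncomputable def fchoose {F : Type*} [Field F] (μ : F) (i : ℕ) : F :=
  (∏ k ∈ Finset.range i, (μ - (k : F))) / (i.factorial : F)

/-!
Everything follows from the Frobenius `x ↦ x ^ p` being a ring endomorphism of the commutative
algebra `F[G]`. Since `σ₂ ^ p = σ₁ ^ (p ^ 2) = 1`, it gives `(σ₂ - 1) ^ p = σ₂ ^ p - 1 = 0` and
`(σ₁ - 1) ^ p = σ₂ - 1`. Applied to `Ψ₁`, it sends the truncated binomial series
`∑ (μ choose i) (σ₂ - 1) ^ i` to `∑ (μ choose i) ^ p (σ₂ - 1) ^ (i p) = 1`, so `Ψ₁ ^ p = σ₂ - 1`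
on the nose and `δ = 0` works.
-/

open Finset

@[simp]
lemma fchoose_zero {F : Type*} [Field F] (μ : F) : fchoose μ 0 = 1 := by
  simp [fchoose]

lemma MonoidAlgebra.of_ofAdd_one_pow_eq_one (k : Type*) [CommSemiring k] (n : ℕ) :
    MonoidAlgebra.of k (Multiplicative (ZMod n)) (Multiplicative.ofAdd 1) ^ n = 1 := by
  rw [← map_pow, ← ofAdd_nsmul, nsmul_one, ZMod.natCast_self, ofAdd_zero, map_one]

section CharP

variable {A : Type*} [CommRing A] (p : ℕ) [Fact p.Prime] [CharP A p]

lemma sub_one_pow_char_eq_zero {x : A} (hx : x ^ p = 1) : (x - 1) ^ p = 0 := by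
  rw [sub_pow_char, hx, one_pow, sub_self]

lemma sum_smul_pow_pow_char_of_pow_char_eq_zero {R : Type*} [CommSemiring R] [Algebra R A]
    {x : A} (hx : x ^ p = 0) (c : ℕ → R) {m : ℕ} (hm : 0 < m) :
    (∑ i ∈ range m, c i • x ^ i) ^ p = c 0 ^ p • 1 := by
  rw [sum_pow_char, sum_eq_single_of_mem 0 (mem_range.mpr hm)]
  · rw [smul_pow, pow_zero, one_pow]
  · intro i _ hi
    rw [smul_pow, ← pow_mul, mul_comm, pow_mul, hx, zero_pow hi, smul_zero]

end CharP

/-- In the group algebra `F[G]` of the cyclic group `G = ⟨σ₁⟩` of order `p²` over a field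
`F` of characteristic `p`, with `σ₂ = σ₁^p`, `Ψ₂ = σ₂ - 1`, and
`Ψ₁ = σ₁·σ₂^{[μ]} - 1 = σ₁·∑_{i=0}^{p-1}(μ choose i)(σ₂-1)^i - 1`:
`Ψ₂^p = 0`, `Ψ₁^p = Ψ₂ + δ` for some `δ` in the ideal generated by `(σ₂-1)²`, and when
`μ = 0` one has `(σ₁-1)^p = σ₂ - 1` exactly. -/
theorem stmt8 (p : ℕ) (hp : p.Prime) (F : Type*) [Field F] [CharP F p] (μ : F)
    (s1 : MonoidAlgebra F (Multiplicative (ZMod (p ^ 2))))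
    (hs1 : s1 = MonoidAlgebra.of F (Multiplicative (ZMod (p ^ 2)))
      (Multiplicative.ofAdd (1 : ZMod (p ^ 2))))
    (s2 Ψ₂ Ψ₁ : MonoidAlgebra F (Multiplicative (ZMod (p ^ 2))))
    (hs2 : s2 = s1 ^ p) (hΨ₂ : Ψ₂ = s2 - 1)
    (hΨ₁ : Ψ₁ = s1 * (∑ i ∈ Finset.range p, fchoose μ i • (s2 - 1) ^ i) - 1) :
    Ψ₂ ^ p = 0 ∧
      (∃ δ ∈ Ideal.span {(s2 - 1) ^ 2}, Ψ₁ ^ p = Ψ₂ + δ) ∧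
      (s1 - 1) ^ p = s2 - 1 := by
  have := Fact.mk hp
  have : CharP (MonoidAlgebra F (Multiplicative (ZMod (p ^ 2)))) p :=
    charP_of_injective_algebraMap' F p
  have hs2_pow : s2 ^ p = 1 := by
    rw [hs2, ← pow_mul, ← sq, hs1, MonoidAlgebra.of_ofAdd_one_pow_eq_one]
  have hΨ₂_pow : Ψ₂ ^ p = 0 := hΨ₂ ▸ sub_one_pow_char_eq_zero p hs2_pow
  have hs1_sub : (s1 - 1) ^ p = s2 - 1 := by rw [sub_pow_char, one_pow, hs2]
  have hΨ₁_pow : Ψ₁ ^ p = Ψ₂ := by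
    rw [hΨ₁, sub_pow_char, mul_pow, ← hs2,
      sum_smul_pow_pow_char_of_pow_char_eq_zero p (hΨ₂ ▸ hΨ₂_pow) _ hp.pos,
      fchoose_zero, one_pow, one_smul, mul_one, one_pow, hΨ₂]
  exact ⟨hΨ₂_pow, ⟨0, Ideal.zero_mem _, by rw [add_zero, hΨ₁_pow]⟩, hs1_sub⟩
end

section
/- Let p be prime and b a positive integer with p ∤ b. Write b₂ = b + p²m with m ≥ b − ⌊b/p²⌋. For 0 ≤ a < p² with p-adic digits a = a₍₀₎ + a₍₁₎p, define 𝔟(a) = (1 + a₍₁₎)·b₂ + a₍₀₎·p·b and d_a = ⌊𝔟(a)/p²⌋. Then for all x, y ≥ 0 with x + y < p² whose digitwise sum involves a carry in the units digit (x₍₀₎ + y₍₀₎ ≥ p), one has d_{x+y} + d₀ ≥ d_x + d_y. -/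
/-- The carry case `ε₍₀₎ = 1` of the freeness condition: with `b₂ = b + p²m`,
`m ≥ b - ⌊b/p²⌋`, `d_a = ⌊((1+a₍₁₎)b₂ + a₍₀₎pb)/p²⌋`, if `x + y < p²` and the
units digits carry (`x₍₀₎ + y₍₀₎ ≥ p`) then `d_{x+y} + d₀ ≥ d_x + d_y`. -/
theorem stmt11 (p : ℕ) (hp : p.Prime) (b : ℕ) (hb : 0 < b) (hpb : ¬ p ∣ b)
    (m : ℕ) (hm : b - b / p ^ 2 ≤ m)
    (b₂ : ℕ) (hb₂ : b₂ = b + p ^ 2 * m)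
    (d : ℕ → ℕ) (hd : ∀ a, d a = ((1 + a / p) * b₂ + a % p * p * b) / p ^ 2)
    (x y : ℕ) (hxy : x + y < p ^ 2) (hcarry : p ≤ x % p + y % p) :
    d x + d y ≤ d (x + y) + d 0 := by
  have hp0 : 0 < p := hp.pos
  have hp2 : 0 < p ^ 2 := by positivity
  set X1 := x / p with hX1
  set X0 := x % p with hX0d
  set Y1 := y / p with hY1
  set Y0 := y % p with hY0d
  have hX0 : X0 < p := Nat.mod_lt _ hp0
  have hY0 : Y0 < p := Nat.mod_lt _ hp0
  have hx : p * X1 + X0 = x := Nat.div_add_mod x p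
  have hy : p * Y1 + Y0 = y := Nat.div_add_mod y p
  have h1 : X0 + Y0 = p + (X0 + Y0 - p) := (Nat.add_sub_cancel' hcarry).symm
  have hsum : x + y = p * (X1 + Y1 + 1) + (X0 + Y0 - p) := by
    calc x + y = p * X1 + X0 + (p * Y1 + Y0) := by rw [hx, hy]
      _ = p * (X1 + Y1) + (X0 + Y0) := by ring
      _ = p * (X1 + Y1) + (p + (X0 + Y0 - p)) := by rw [← h1]
      _ = p * (X1 + Y1 + 1) + (X0 + Y0 - p) := by ring
  have hr : X0 + Y0 - p < p := by omega
  have hq : (x + y) / p = X1 + Y1 + 1 := by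
    rw [hsum, Nat.mul_add_div hp0, Nat.div_eq_of_lt hr, Nat.add_zero]
  have hmod : (x + y) % p = X0 + Y0 - p := by
    rw [hsum, Nat.mul_add_mod, Nat.mod_eq_of_lt hr]
  rw [hd, hd, hd, hd, hq, hmod, hb₂]
  simp only [Nat.zero_div, Nat.zero_mod, Nat.zero_mul, Nat.add_zero]
  have key : ∀ a1 a0 : ℕ, ((1 + a1) * (b + p ^ 2 * m) + a0 * p * b) / p ^ 2
      = ((1 + a1 + a0 * p) * b) / p ^ 2 + (1 + a1) * m := by
    intro a1 a0
    have h : (1 + a1) * (b + p ^ 2 * m) + a0 * p * b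
        = (1 + a1 + a0 * p) * b + p ^ 2 * ((1 + a1) * m) := by ring
    rw [h, Nat.add_mul_div_left _ _ hp2]
  have key0 : (1 + 0) * (b + p ^ 2 * m) / p ^ 2 = b / p ^ 2 + (1 + 0) * m := by
    have h : (1 + 0) * (b + p ^ 2 * m) = b + p ^ 2 * ((1 + 0) * m) := by ring
    rw [h, Nat.add_mul_div_left _ _ hp2]
  rw [key X1 X0, key Y1 Y0, key (X1 + Y1 + 1) (X0 + Y0 - p), key0]
  set u := 1 + X1 + X0 * p with hu
  set v := 1 + Y1 + Y0 * p with hv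
  set w := 1 + (X1 + Y1 + 1) + (X0 + Y0 - p) * p with hw
  have hsub : (X0 + Y0 - p) * p + p * p = (X0 + Y0) * p := by
    rw [Nat.sub_mul]
    exact Nat.sub_add_cancel (Nat.mul_le_mul_right p hcarry)
  have huv : u + v = w + p ^ 2 := by
    calc u + v = 2 + X1 + Y1 + (X0 + Y0) * p := by rw [hu, hv]; ring
      _ = 2 + X1 + Y1 + ((X0 + Y0 - p) * p + p * p) := by rw [hsub]
      _ = w + p ^ 2 := by rw [hw, sq]; ring
  have hA : u * b / p ^ 2 + v * b / p ^ 2 ≤ w * b / p ^ 2 + b := by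
    have h1 : u * b / p ^ 2 + v * b / p ^ 2 ≤ (u * b + v * b) / p ^ 2 :=
      Nat.add_div_le_add_div _ _ _
    have h2 : u * b + v * b = w * b + p ^ 2 * b := by
      calc u * b + v * b = (u + v) * b := by ring
        _ = (w + p ^ 2) * b := by rw [huv]
        _ = w * b + p ^ 2 * b := by ring
    rw [h2, Nat.add_mul_div_left _ _ hp2] at h1
    exact h1
  have hble : b ≤ b / p ^ 2 + m := by
    have := Nat.sub_le_iff_le_add.mp hm
    omega
  linarith [hA, hble]
end
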